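/- arXiv:2404.15607 — 5 statements merged into one kernel-verified Lean document; each statement's English description precedes it below -/
import Mathlib

section
/- Let n agents have identical additive valuation v : G → ℝ≥0 over a finite item set G. If σ is an EF1 allocation and σ* is any allocation, then ∏_{i=1}^n v(σ*⁻¹(i)) ≤ e^{n/e} · ∏_{i=1}^n v(σ⁻¹(i)), provided ∏_i v(σ⁻¹(i)) > 0. -/
open Finset Real

private lemma log_le_div_e {x : ℝ} (hx : 0 < x) : Real.log x ≤ x / Real.exp 1 := by
  have h := Real.log_le_sub_one_of_pos (show (0:ℝ) < x / Real.exp 1 by positivity)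
  rw [Real.log_div hx.ne' (Real.exp_ne_zero 1), Real.log_exp] at h
  linarith

private lemma chord_lem {t : ℝ} (h1 : 1 ≤ t) (h2 : t ≤ Real.exp 1 + 1) :
    (t - 1) / Real.exp 1 ≤ Real.log t := by
  have he : (0:ℝ) < Real.exp 1 := Real.exp_pos 1
  have hmem1 : (1:ℝ) ∈ Set.Ioi (0:ℝ) := by norm_num
  have hmem2 : Real.exp 1 + 1 ∈ Set.Ioi (0:ℝ) := by
    simp only [Set.mem_Ioi]; positivity
  have ha : (0:ℝ) ≤ (Real.exp 1 + 1 - t) / Real.exp 1 := by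
    apply div_nonneg _ he.le; linarith
  have hb : (0:ℝ) ≤ (t - 1) / Real.exp 1 := by
    apply div_nonneg _ he.le; linarith
  have hab : (Real.exp 1 + 1 - t) / Real.exp 1 + (t - 1) / Real.exp 1 = 1 := by
    field_simp
    ring
  have hcomb := (strictConcaveOn_log_Ioi.concaveOn).2 hmem1 hmem2 ha hb hab
  have hx : ((Real.exp 1 + 1 - t) / Real.exp 1) • (1:ℝ)
      + ((t - 1) / Real.exp 1) • (Real.exp 1 + 1) = t := by
    simp only [smul_eq_mul]
    field_simp
    ring
  rw [hx] at hcomb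
  simp only [smul_eq_mul, Real.log_one, mul_zero, zero_add] at hcomb
  have hlog : (1:ℝ) ≤ Real.log (Real.exp 1 + 1) := by
    have : Real.log (Real.exp 1) ≤ Real.log (Real.exp 1 + 1) := by
      apply Real.log_le_log (Real.exp_pos 1); linarith
    rwa [Real.log_exp] at this
  nlinarith [hb]

private lemma psi_superadd {m x y : ℝ} (hm : 0 < m) (hx : m ≤ x) (hy : m ≤ y) :
    Real.log (x + y - m) - (x + y - m) / (Real.exp 1 * m) + (Real.log m - (Real.exp 1)⁻¹)
      ≤ (Real.log x - x / (Real.exp 1 * m)) + (Real.log y - y / (Real.exp 1 * m)) := by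
  have hx0 : 0 < x := lt_of_lt_of_le hm hx
  have hy0 : 0 < y := lt_of_lt_of_le hm hy
  have hxy0 : 0 < x + y - m := by linarith
  have hlog : Real.log (x + y - m) + Real.log m ≤ Real.log x + Real.log y := by
    rw [← Real.log_mul hxy0.ne' hm.ne', ← Real.log_mul hx0.ne' hy0.ne']
    apply Real.log_le_log (by positivity)
    nlinarith
  have hlin : (x + y - m) / (Real.exp 1 * m) + (Real.exp 1)⁻¹
      = x / (Real.exp 1 * m) + y / (Real.exp 1 * m) := by
    have he : (0:ℝ) < Real.exp 1 := Real.exp_pos 1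
    field_simp
    ring
  linarith

private lemma row_key {m b c : ℝ} (hm : 0 < m) (hb : 0 < b) (hc : m ≤ c) (hbc : c - m ≤ b) :
    Real.log b - b / (Real.exp 1 * m) ≤ (Real.exp 1)⁻¹ + (Real.log c - c / (Real.exp 1 * m)) := by
  have he : (0:ℝ) < Real.exp 1 := Real.exp_pos 1
  have hc0 : 0 < c := lt_of_lt_of_le hm hc
  have hE : (0:ℝ) < Real.exp 1 * m := by positivity
  by_cases hcase : c ≤ Real.exp 1 * m + m
  · have h1 : Real.log b - Real.log m ≤ b / (Real.exp 1 * m) := by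
      have h := log_le_div_e (show (0:ℝ) < b / m by positivity)
      rw [Real.log_div hb.ne' hm.ne'] at h
      have heq : b / m / Real.exp 1 = b / (Real.exp 1 * m) := by
        rw [div_div, mul_comm]
      linarith [heq ▸ h]
    have h2 : c / (Real.exp 1 * m) - (Real.exp 1)⁻¹ ≤ Real.log c - Real.log m := by
      have ht1 : 1 ≤ c / m := (one_le_div hm).mpr hc
      have ht2 : c / m ≤ Real.exp 1 + 1 := by
        rw [div_le_iff₀ hm]; linarith [hcase]
      have h := chord_lem ht1 ht2
      rw [Real.log_div hc0.ne' hm.ne'] at h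
      have heq : (c / m - 1) / Real.exp 1 = c / (Real.exp 1 * m) - (Real.exp 1)⁻¹ := by
        field_simp
      linarith [heq ▸ h]
    linarith
  · push_neg at hcase
    have hcm0 : 0 < c - m := by nlinarith
    have hcme : Real.exp 1 * m ≤ c - m := by linarith
    have h1 : Real.log b - Real.log (c - m) ≤ (b - (c - m)) / (Real.exp 1 * m) := by
      have h := Real.log_le_sub_one_of_pos (show (0:ℝ) < b / (c - m) by positivity)
      rw [Real.log_div hb.ne' hcm0.ne'] at h
      have h2 : b / (c - m) - 1 = (b - (c - m)) / (c - m) := by field_simp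
      have h3 : (b - (c - m)) / (c - m) ≤ (b - (c - m)) / (Real.exp 1 * m) := by
        rw [div_le_div_iff₀ hcm0 hE]
        nlinarith [sub_nonneg.mpr hbc]
      linarith
    have h2 : Real.log (c - m) ≤ Real.log c := Real.log_le_log hcm0 (by linarith)
    have h3 : (c - m) / (Real.exp 1 * m) = c / (Real.exp 1 * m) - (Real.exp 1)⁻¹ := by
      field_simp
    have hsplit : (b - (c - m)) / (Real.exp 1 * m)
        = b / (Real.exp 1 * m) - (c - m) / (Real.exp 1 * m) := sub_div _ _ _
    linarith

private lemma fold_psi {ι : Type*} [DecidableEq ι] {m : ℝ} (hm : 0 < m) (a : ι → ℝ) :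
    ∀ F : Finset ι, F.Nonempty → (∀ j ∈ F, m ≤ a j) →
      Real.log ((∑ j ∈ F, a j) - ((F.card : ℝ) - 1) * m)
        - ((∑ j ∈ F, a j) - ((F.card : ℝ) - 1) * m) / (Real.exp 1 * m)
        + ((F.card : ℝ) - 1) * (Real.log m - (Real.exp 1)⁻¹)
      ≤ ∑ j ∈ F, (Real.log (a j) - a j / (Real.exp 1 * m)) := by
  intro F
  induction F using Finset.induction_on with
  | empty => intro h _; exact absurd h (by simp)
  | @insert j F hj ih =>
    intro _ ha
    rcases F.eq_empty_or_nonempty with rfl | hFne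
    · simp
    · have ihF := ih hFne (fun x hx => ha x (Finset.mem_insert_of_mem hx))
      have hx : m ≤ a j := ha j (Finset.mem_insert_self j F)
      have hcard : (1:ℝ) ≤ (F.card : ℝ) := by
        exact_mod_cast Nat.one_le_iff_ne_zero.mpr (Finset.card_ne_zero_of_mem hFne.choose_spec)
      have hsumF : (F.card : ℝ) * m ≤ ∑ x ∈ F, a x := by
        have h := Finset.card_nsmul_le_sum F a m (fun x hx => ha x (Finset.mem_insert_of_mem hx))
        simpa [nsmul_eq_mul] using h
      have hy : m ≤ (∑ x ∈ F, a x) - ((F.card : ℝ) - 1) * m := by nlinarith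
      have hsup := psi_superadd hm hx hy
      have hXeq : a j + ((∑ x ∈ F, a x) - ((F.card : ℝ) - 1) * m) - m
          = (a j + ∑ x ∈ F, a x) - (((F.card : ℝ) + 1) - 1) * m := by ring
      rw [hXeq] at hsup
      rw [Finset.sum_insert hj, Finset.sum_insert hj, Finset.card_insert_of_notMem hj]
      push_cast
      linarith

private theorem main_aux {n : ℕ} (a b : Fin n → ℝ)
    (ha : ∀ j, 0 < a j) (hb : ∀ i, 0 < b i)
    (hsum : ∑ i, b i = ∑ j, a j)
    {m : ℝ} (hm : 0 < m) (hmin : ∀ j, m ≤ a j)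
    (f : Fin n → Fin n)
    (hkey : ∀ i, (∑ j ∈ Finset.univ.filter (fun j => f j = i), (a j - m)) ≤ b i) :
    ∏ i, b i ≤ Real.exp ((n : ℝ) / Real.exp 1) * ∏ j, a j := by
  classical
  have he : (0:ℝ) < Real.exp 1 := Real.exp_pos 1
  have hE : (0:ℝ) < Real.exp 1 * m := by positivity
  -- per-row bound
  have hrow : ∀ i, Real.log (b i) - b i / (Real.exp 1 * m)
      ≤ (Real.exp 1)⁻¹
        + (1 - ((Finset.univ.filter (fun j => f j = i)).card : ℝ))
            * (Real.log m - (Real.exp 1)⁻¹)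
        + ∑ j ∈ Finset.univ.filter (fun j => f j = i),
            (Real.log (a j) - a j / (Real.exp 1 * m)) := by
    intro i
    rcases (Finset.univ.filter (fun j => f j = i)).eq_empty_or_nonempty with hFe | hFne
    · rw [hFe]
      simp only [Finset.card_empty, Nat.cast_zero, Finset.sum_empty, sub_zero, one_mul]
      have h := log_le_div_e (div_pos (hb i) hm)
      rw [Real.log_div (hb i).ne' hm.ne'] at h
      have heq : b i / m / Real.exp 1 = b i / (Real.exp 1 * m) := by
        rw [div_div, mul_comm]
      rw [heq] at h
      linarith
    · have hfold := fold_psi hm a _ hFne (fun j _ => hmin j)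
      have hsumF : ((Finset.univ.filter (fun j => f j = i)).card : ℝ) * m
          ≤ ∑ j ∈ Finset.univ.filter (fun j => f j = i), a j := by
        have h := Finset.card_nsmul_le_sum (Finset.univ.filter (fun j => f j = i)) a m
          (fun x _ => hmin x)
        simpa [nsmul_eq_mul] using h
      have hcm : m ≤ (∑ j ∈ Finset.univ.filter (fun j => f j = i), a j)
          - (((Finset.univ.filter (fun j => f j = i)).card : ℝ) - 1) * m := by nlinarith
      have hbc : (∑ j ∈ Finset.univ.filter (fun j => f j = i), a j)
          - (((Finset.univ.filter (fun j => f j = i)).card : ℝ) - 1) * m - m ≤ b i := by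
        have h := hkey i
        rw [Finset.sum_sub_distrib, Finset.sum_const, nsmul_eq_mul] at h
        linarith
      have hsl := row_key hm (hb i) hcm hbc
      linarith
  -- sum over rows
  have hsum_rows := Finset.sum_le_sum (fun i (_ : i ∈ Finset.univ) => hrow i)
  rw [Finset.sum_add_distrib, Finset.sum_add_distrib] at hsum_rows
  have hfib : ∑ i : Fin n, ∑ j ∈ Finset.univ.filter (fun j => f j = i),
      (Real.log (a j) - a j / (Real.exp 1 * m))
      = ∑ j, (Real.log (a j) - a j / (Real.exp 1 * m)) :=
    Finset.sum_fiberwise_of_maps_to (fun x _ => Finset.mem_univ (f x)) _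
  have hcount : ∑ i : Fin n, ((Finset.univ.filter (fun j => f j = i)).card : ℝ) = (n : ℝ) := by
    have h := Finset.card_eq_sum_card_fiberwise
      (f := f) (s := Finset.univ) (t := Finset.univ) (fun x _ => Finset.mem_univ (f x))
    have h2 : (Finset.univ : Finset (Fin n)).card = n := by simp
    rw [h2] at h
    exact_mod_cast congrArg (Nat.cast : ℕ → ℝ) h |>.symm
  have hmid : ∑ i : Fin n, (1 - ((Finset.univ.filter (fun j => f j = i)).card : ℝ))
      * (Real.log m - (Real.exp 1)⁻¹) = 0 := by
    rw [← Finset.sum_mul, Finset.sum_sub_distrib, Finset.sum_const, hcount]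
    simp
  have hconst : ∑ _i : Fin n, (Real.exp 1)⁻¹ = (n : ℝ) * (Real.exp 1)⁻¹ := by
    rw [Finset.sum_const]
    simp [mul_comm]
  rw [hfib, hmid, hconst, add_zero] at hsum_rows
  have hsplitb : ∑ i, (Real.log (b i) - b i / (Real.exp 1 * m))
      = (∑ i, Real.log (b i)) - (∑ i, b i) / (Real.exp 1 * m) := by
    rw [Finset.sum_sub_distrib, Finset.sum_div]
  have hsplita : ∑ j, (Real.log (a j) - a j / (Real.exp 1 * m))
      = (∑ j, Real.log (a j)) - (∑ j, a j) / (Real.exp 1 * m) := by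
    rw [Finset.sum_sub_distrib, Finset.sum_div]
  rw [hsplitb, hsplita, hsum] at hsum_rows
  have hlogs : ∑ i, Real.log (b i) ≤ (n : ℝ) * (Real.exp 1)⁻¹ + ∑ j, Real.log (a j) := by
    linarith
  -- conclude
  have hpb : ∏ i, b i = Real.exp (∑ i, Real.log (b i)) := by
    rw [Real.exp_sum]
    exact Finset.prod_congr rfl (fun i _ => (Real.exp_log (hb i)).symm)
  have hpa : ∏ j, a j = Real.exp (∑ j, Real.log (a j)) := by
    rw [Real.exp_sum]
    exact Finset.prod_congr rfl (fun j _ => (Real.exp_log (ha j)).symm)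
  rw [hpb, hpa, ← Real.exp_add]
  apply Real.exp_le_exp.mpr
  rw [div_eq_mul_inv]
  linarith


/-- BKV Theorem: for identical additive valuations, any EF1 allocation `σ`
is `e^(1/e)`-approximate for Nash Social Welfare:
`∏_i v(σ*⁻¹(i)) ≤ e^(n/e) · ∏_i v(σ⁻¹(i))` for any allocation `σ*`. -/
theorem ef1_nsw_approx {G : Type*} [Fintype G] [DecidableEq G] (n : ℕ)
    (v : G → ℝ) (hv : ∀ j, 0 ≤ v j) (σ σstar : G → Fin n)
    (hEF1 : ∀ i i' : Fin n, i ≠ i' →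
      (Finset.univ.filter (fun j => σ j = i')).Nonempty →
      ∃ j ∈ Finset.univ.filter (fun j => σ j = i'),
        ∑ j' ∈ (Finset.univ.filter (fun j => σ j = i')).erase j, v j'
          ≤ ∑ j' ∈ Finset.univ.filter (fun j => σ j = i), v j')
    (hpos : 0 < ∏ i : Fin n, ∑ j ∈ Finset.univ.filter (fun j => σ j = i), v j) :
    ∏ i : Fin n, ∑ j ∈ Finset.univ.filter (fun j => σstar j = i), v j
      ≤ Real.exp ((n : ℝ) / Real.exp 1)
        * ∏ i : Fin n, ∑ j ∈ Finset.univ.filter (fun j => σ j = i), v j := by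
  classical
  obtain rfl | hn := Nat.eq_zero_or_pos n
  · simp
  haveI : NeZero n := ⟨hn.ne'⟩
  set A : Fin n → ℝ := fun i => ∑ j ∈ Finset.univ.filter (fun j => σ j = i), v j with hA_def
  set B : Fin n → ℝ := fun i => ∑ j ∈ Finset.univ.filter (fun j => σstar j = i), v j with hB_def
  show ∏ i, B i ≤ _ * ∏ i, A i
  have hAnn : ∀ i, 0 ≤ A i := fun i => Finset.sum_nonneg fun g _ => hv g
  have hBnn : ∀ i, 0 ≤ B i := fun i => Finset.sum_nonneg fun g _ => hv g
  have hApos : ∀ i, 0 < A i := by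
    intro i
    rcases (hAnn i).eq_or_lt with h | h
    · exfalso
      have hz : (∏ i : Fin n, A i) = 0 := Finset.prod_eq_zero (Finset.mem_univ i) h.symm
      have : (0:ℝ) < ∏ i : Fin n, A i := hpos
      rw [hz] at this
      exact lt_irrefl 0 this
    · exact h
  -- the case some bundle of σstar is empty/zero
  by_cases hB0 : ∃ i, B i = 0
  · obtain ⟨i, hi⟩ := hB0
    have hz : (∏ i : Fin n, B i) = 0 := Finset.prod_eq_zero (Finset.mem_univ i) hi
    rw [hz]
    have : (0:ℝ) < ∏ i : Fin n, A i := hpos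
    positivity
  push_neg at hB0
  have hBpos : ∀ i, 0 < B i := fun i => (hBnn i).lt_of_ne (Ne.symm (hB0 i))
  -- minimum bundle
  obtain ⟨i₀, -, hi₀⟩ := Finset.exists_min_image Finset.univ A Finset.univ_nonempty
  have hmin : ∀ j, A i₀ ≤ A j := fun j => hi₀ j (Finset.mem_univ j)
  have hm : 0 < A i₀ := hApos i₀
  -- choose the EF1 witness good in each σ-bundle
  have hgood : ∀ j : Fin n, ∃ gd : G, σ gd = j ∧ A j - v gd ≤ A i₀ := by
    intro j
    have hne : (Finset.univ.filter (fun g => σ g = j)).Nonempty := by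
      by_contra hempty
      rw [Finset.not_nonempty_iff_eq_empty] at hempty
      have hz : A j = 0 := by
        rw [hA_def]
        simp only [hempty, Finset.sum_empty]
      exact (hApos j).ne' hz
    by_cases hj : j = i₀
    · obtain ⟨gd, hgd⟩ := hne
      rw [Finset.mem_filter] at hgd
      refine ⟨gd, hgd.2, ?_⟩
      rw [hj]
      linarith [hv gd]
    · obtain ⟨gd, hgdmem, hgdsum⟩ := hEF1 i₀ j (fun h => hj h.symm) hne
      rw [Finset.mem_filter] at hgdmem
      have hsplit : v gd + ∑ j' ∈ (Finset.univ.filter (fun g => σ g = j)).erase gd, v j' = A j := by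
        rw [hA_def]
        exact Finset.add_sum_erase _ v (by rw [Finset.mem_filter]; exact hgdmem)
      refine ⟨gd, hgdmem.2, ?_⟩
      have : (∑ j' ∈ Finset.univ.filter (fun g => σ g = i₀), v j') = A i₀ := rfl
      linarith [hgdsum, this ▸ hgdsum]
  choose gd hgdσ hgdle using hgood
  -- sums agree
  have hsum : ∑ i, B i = ∑ j, A j := by
    rw [hA_def, hB_def]
    rw [Finset.sum_fiberwise_of_maps_to (fun x (_ : x ∈ Finset.univ) => Finset.mem_univ (σstar x)) v,
      Finset.sum_fiberwise_of_maps_to (fun x (_ : x ∈ Finset.univ) => Finset.mem_univ (σ x)) v]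
  -- key inequality via the fiber map f
  have hkey : ∀ i, (∑ j ∈ Finset.univ.filter (fun j => σstar (gd j) = i), (A j - A i₀)) ≤ B i := by
    intro i
    have h1 : (∑ j ∈ Finset.univ.filter (fun j => σstar (gd j) = i), (A j - A i₀))
        ≤ ∑ j ∈ Finset.univ.filter (fun j => σstar (gd j) = i), v (gd j) :=
      Finset.sum_le_sum (fun j _ => by linarith [hgdle j])
    have h2 : ∑ j ∈ Finset.univ.filter (fun j => σstar (gd j) = i), v (gd j)
        = ∑ x ∈ (Finset.univ.filter (fun j => σstar (gd j) = i)).image gd, v x :=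
      (Finset.sum_image (fun x _ y _ hxy => by
        have := congrArg σ hxy
        rwa [hgdσ x, hgdσ y] at this)).symm
    have h3 : (Finset.univ.filter (fun j => σstar (gd j) = i)).image gd
        ⊆ Finset.univ.filter (fun g => σstar g = i) := by
      intro x hx
      simp only [Finset.mem_image, Finset.mem_filter] at hx ⊢
      obtain ⟨j, hj, rfl⟩ := hx
      exact ⟨Finset.mem_univ _, hj.2⟩
    have h4 : ∑ x ∈ (Finset.univ.filter (fun j => σstar (gd j) = i)).image gd, v x
        ≤ ∑ x ∈ Finset.univ.filter (fun g => σstar g = i), v x :=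
      Finset.sum_le_sum_of_subset_of_nonneg h3 (fun x _ _ => hv x)
    have h5 : (∑ x ∈ Finset.univ.filter (fun g => σstar g = i), v x) = B i := rfl
    linarith [h5 ▸ h4]
  exact main_aux A B hApos hBpos hsum hm hmin (fun j => σstar (gd j)) hkey
end

section
/- Let x : G → [0,1] be nonnegative fractions over a finite ordered item set G with total mass T = ∑_j x_j > 0, and let p = ⌈T⌉. Then there exist unique vectors g^1,…,g^p ∈ [0,1]^G such that: (1) |g^t|_1 = 1 for t < p and |g^p|_1 = T − (p−1); (2) ∑_{t=1}^p g^t_j = x_j for all j; (3) for all t < t' and items j before j' in the order, it is not the case that g^t_{j'} > 0 and g^{t'}_j > 0. -/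
/-!
Lay the items end to end on `[0, T]` in their order, item `j` occupying
`[S j, S j + x j]` where `S j` is the mass of the items before it, and cut `[0, T]` at the
integers: `g t j` is the length of the piece of item `j` in `[t, t + 1]`.

Conversely, in any decomposition the cumulative groups `g 0 + ⋯ + g t` fill `x` greedily in
item order, by (P3). A greedy fill of `x` is determined by its total mass, which (P1) fixes,
so the cumulative groups, and hence the groups, are unique.
-/

open Finset

section IntervalOverlap

/-- The length of `[a, b] ∩ [c, d]`. -/
def intervalOverlap (a b c d : ℝ) : ℝ := max 0 (min b d - max a c)

variable {a b c d : ℝ}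

lemma intervalOverlap_comm (a b c d : ℝ) : intervalOverlap a b c d = intervalOverlap c d a b := by
  rw [intervalOverlap, intervalOverlap, min_comm, max_comm a]

lemma intervalOverlap_nonneg : 0 ≤ intervalOverlap a b c d := le_max_left _ _

lemma intervalOverlap_le_sub (hcd : c ≤ d) : intervalOverlap a b c d ≤ d - c :=
  max_le (by linarith) (by linarith [min_le_right b d, le_max_right a c])

lemma intervalOverlap_eq_sub (hab : a ≤ b) (hcd : c ≤ d) :
    intervalOverlap a b c d = min (max b c) d - min (max a c) d := by
  simp only [intervalOverlap, min_def, max_def]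
  split_ifs <;> linarith

lemma lt_of_intervalOverlap_pos (h : 0 < intervalOverlap a b c d) : a < d ∧ c < b := by
  have h' : 0 < min b d - max a c := (lt_max_iff.mp h).resolve_left (lt_irrefl 0)
  exact ⟨by linarith [le_max_left a c, min_le_right b d],
    by linarith [le_max_right a c, min_le_left b d]⟩

end IntervalOverlap

theorem Finset.sum_sub_apply_prefix_sum {G R M : Type*} [LinearOrder G] [AddCommMonoid R]
    [AddCommGroup M] (s : Finset G) (x : G → R) (F : R → M) :
    ∑ j ∈ s, (F (∑ k ∈ s with k < j, x k + x j) - F (∑ k ∈ s with k < j, x k)) =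
      F (∑ j ∈ s, x j) - F 0 := by
  induction s using Finset.induction_on_max with
  | empty => simp
  | insert a s ha ih =>
    have ha' : a ∉ s := fun h => lt_irrefl a (ha a h)
    have hbelow_a : {k ∈ insert a s | k < a} = s := by
      rw [filter_insert, if_neg (lt_irrefl a), filter_true_of_mem ha]
    have hbelow : ∀ j ∈ s, {k ∈ insert a s | k < j} = {k ∈ s | k < j} := fun j hj => by
      rw [filter_insert, if_neg (ha j hj).not_gt]
    have hrest : ∑ j ∈ s, (F (∑ k ∈ insert a s with k < j, x k + x j) -
        F (∑ k ∈ insert a s with k < j, x k)) =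
        ∑ j ∈ s, (F (∑ k ∈ s with k < j, x k + x j) - F (∑ k ∈ s with k < j, x k)) :=
      sum_congr rfl fun j hj => by rw [hbelow j hj]
    rw [sum_insert ha', hbelow_a, hrest, ih, sum_insert ha', add_comm (x a)]
    abel

theorem Finset.eq_of_sum_Iic_eq {ι M : Type*} [LinearOrder ι] [LocallyFiniteOrderBot ι]
    [WellFoundedLT ι] [AddCancelCommMonoid M] {a b : ι → M}
    (h : ∀ t, ∑ s ∈ Iic t, a s = ∑ s ∈ Iic t, b s) : a = b := by
  funext t
  induction t using WellFoundedLT.induction with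
  | _ t ih =>
    have ht := h t
    rw [← Iio_insert, sum_insert notMem_Iio_self, sum_insert notMem_Iio_self,
      sum_congr rfl fun s hs => ih s (mem_Iio.mp hs)] at ht
    exact add_right_cancel ht

section GroupDecomposition

variable {G : Type*} [LinearOrder G] {x : G → ℝ}

section Existence

variable [Fintype G]

def prefixMass (x : G → ℝ) (j : G) : ℝ := ∑ k with k < j, x k

lemma prefixMass_nonneg (hx : ∀ j, 0 ≤ x j) (j : G) : 0 ≤ prefixMass x j :=
  sum_nonneg fun k _ => hx k

lemma prefixMass_add_self (j : G) : prefixMass x j + x j = ∑ k with k ≤ j, x k := by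
  have h : filter (· ≤ j) univ = insert j (filter (· < j) univ) := by
    ext k
    simp [le_iff_lt_or_eq, or_comm]
  rw [h, sum_insert (by simp), add_comm, prefixMass]

lemma prefixMass_add_self_le_sum (hx : ∀ j, 0 ≤ x j) (j : G) :
    prefixMass x j + x j ≤ ∑ k, x k := by
  rw [prefixMass_add_self]
  exact sum_le_sum_of_subset_of_nonneg (subset_univ _) fun k _ _ => hx k

lemma prefixMass_add_self_le (hx : ∀ j, 0 ≤ x j) {j j' : G} (h : j < j') :
    prefixMass x j + x j ≤ prefixMass x j' := by
  rw [prefixMass_add_self]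
  refine sum_le_sum_of_subset_of_nonneg (fun k hk => ?_) fun k _ _ => hx k
  simp only [mem_filter, mem_univ, true_and] at hk ⊢
  exact hk.trans_lt h

/-- Item `j` occupies `[prefixMass x j, prefixMass x j + x j]` and group `t` is `[t, t + 1]`. -/
def groupPart (x : G → ℝ) (t : ℕ) (j : G) : ℝ :=
  intervalOverlap (prefixMass x j) (prefixMass x j + x j) t (t + 1)

lemma groupPart_le_one (t : ℕ) (j : G) : groupPart x t j ≤ 1 :=
  (intervalOverlap_le_sub (by linarith)).trans_eq (by ring)

lemma sum_groupPart (hx : ∀ j, 0 ≤ x j) {t : ℕ} (ht : (t : ℝ) ≤ ∑ j, x j) :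
    ∑ j, groupPart x t j = min (∑ j, x j) (t + 1) - t := by
  set F := fun v => min (max v (t : ℝ)) (t + 1)
  have key : ∑ j, (F (prefixMass x j + x j) - F (prefixMass x j)) = F (∑ j, x j) - F 0 :=
    sum_sub_apply_prefix_sum univ x F
  have hterm (j : G) : groupPart x t j = F (prefixMass x j + x j) - F (prefixMass x j) :=
    intervalOverlap_eq_sub (le_add_of_nonneg_right (hx j)) (by linarith)
  simp only [hterm, key, F]
  rw [max_eq_left ht, max_eq_right (Nat.cast_nonneg t),
    min_eq_left (by linarith : (t : ℝ) ≤ t + 1)]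

lemma sum_fin_groupPart (hx : ∀ j, 0 ≤ x j) {p : ℕ} (hp : ∑ j, x j ≤ p) (j : G) :
    ∑ t : Fin p, groupPart x t j = x j := by
  set S := prefixMass x j
  have hS := prefixMass_nonneg hx j
  have hSp := prefixMass_add_self_le_sum hx j
  have key := sum_range_sub (fun t : ℕ => min (max (t : ℝ) S) (S + x j)) p
  push_cast at key
  have hterm (t : ℕ) : groupPart x t j =
      min (max ((t : ℝ) + 1) S) (S + x j) - min (max (t : ℝ) S) (S + x j) := by
    rw [groupPart, intervalOverlap_comm, intervalOverlap_eq_sub (by linarith)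
      (le_add_of_nonneg_right (hx j))]
  simp only [hterm]
  rw [Fin.sum_univ_eq_sum_range (fun t : ℕ => min (max ((t : ℝ) + 1) S) (S + x j) -
    min (max (t : ℝ) S) (S + x j)) p, key, max_eq_left (by linarith [hx j]),
    min_eq_right (by linarith), max_eq_right hS, min_eq_left (by linarith [hx j])]
  ring

end Existence

def IsStaircase {ι : Type*} [LT ι] (g : ι → G → ℝ) : Prop :=
  ∀ t t' : ι, t < t' → ∀ j j' : G, j < j' → ¬(0 < g t j' ∧ 0 < g t' j)

lemma isStaircase_groupPart [Fintype G] (hx : ∀ j, 0 ≤ x j) : IsStaircase (groupPart x) := by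
  rintro t t' htt' j j' hjj' ⟨hpos, hpos'⟩
  have h1 := (lt_of_intervalOverlap_pos hpos).1
  have h2 := (lt_of_intervalOverlap_pos hpos').2
  have h3 := prefixMass_add_self_le hx hjj'
  have : (t' : ℝ) < t + 1 := by linarith
  have : t' < t + 1 := by exact_mod_cast this
  omega

section Uniqueness

structure IsPrefixFill (x y : G → ℝ) : Prop where
  nonneg : ∀ k, 0 ≤ y k
  le : ∀ k, y k ≤ x k
  eq_of_pos : ∀ ⦃k k'⦄, k < k' → 0 < y k' → y k = x k

lemma IsPrefixFill.sum_lt_sum [Fintype G] {y z : G → ℝ} (hy : IsPrefixFill x y)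
    (hz : IsPrefixFill x z) {j : G} (hagree : ∀ i < j, y i = z i) (hlt : y j < z j) :
    ∑ k, y k < ∑ k, z k := by
  have hle : ∀ k, y k ≤ z k := fun k => by
    rcases lt_trichotomy k j with hk | rfl | hk
    · exact (hagree k hk).le
    · exact hlt.le
    · have : y k = 0 := by
        by_contra hne
        exact (hlt.trans_le (hz.le j)).ne (hy.eq_of_pos hk ((hy.nonneg k).lt_of_ne' hne))
      exact this ▸ hz.nonneg k
  exact Finset.sum_lt_sum (fun k _ => hle k) ⟨j, mem_univ j, hlt⟩

lemma IsPrefixFill.eq_of_sum_eq [Fintype G] {y z : G → ℝ} (hy : IsPrefixFill x y)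
    (hz : IsPrefixFill x z) (h : ∑ k, y k = ∑ k, z k) : y = z := by
  by_contra hne
  obtain ⟨j, hj, hmin⟩ := wellFounded_lt.has_min {j | y j ≠ z j} (Function.ne_iff.mp hne)
  have hagree : ∀ i < j, y i = z i := fun i hi => not_not.mp fun h => hmin i h hi
  rcases lt_or_gt_of_ne hj with hlt | hlt
  · exact (hy.sum_lt_sum hz hagree hlt).ne h
  · exact (hz.sum_lt_sum hy (fun i hi => (hagree i hi).symm) hlt).ne' h

variable {ι : Type*} [Fintype ι] [LinearOrder ι] [LocallyFiniteOrderBot ι]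

lemma IsStaircase.isPrefixFill_sum_Iic {g : ι → G → ℝ} (hg : IsStaircase g)
    (hg0 : ∀ t j, 0 ≤ g t j) (hgx : ∀ j, ∑ t, g t j = x j) (t : ι) :
    IsPrefixFill x fun j => ∑ s ∈ Iic t, g s j where
  nonneg j := sum_nonneg fun s _ => hg0 s j
  le j := hgx j ▸ sum_le_sum_of_subset_of_nonneg (subset_univ _) fun s _ _ => hg0 s j
  eq_of_pos k k' hkk' hpos := by
    obtain ⟨s, hs, hspos⟩ : ∃ s ∈ Iic t, 0 < g s k' := exists_lt_of_sum_lt (by simpa using hpos)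
    rw [← hgx k]
    refine sum_subset (subset_univ _) fun s' _ hs' => ?_
    by_contra hne
    exact hg s s' ((mem_Iic.mp hs).trans_lt (not_le.mp (by simpa using hs'))) k k' hkk'
      ⟨hspos, (hg0 s' k).lt_of_ne' hne⟩

theorem IsStaircase.eq_of_sum_eq [Fintype G] {g h : ι → G → ℝ} (hg : IsStaircase g)
    (hh : IsStaircase h) (hg0 : ∀ t j, 0 ≤ g t j) (hh0 : ∀ t j, 0 ≤ h t j)
    (hgx : ∀ j, ∑ t, g t j = x j) (hhx : ∀ j, ∑ t, h t j = x j)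
    (hrow : ∀ t, ∑ j, g t j = ∑ j, h t j) : g = h := by
  have hcum (t : ι) : (fun j => ∑ s ∈ Iic t, g s j) = fun j => ∑ s ∈ Iic t, h s j :=
    (hg.isPrefixFill_sum_Iic hg0 hgx t).eq_of_sum_eq (hh.isPrefixFill_sum_Iic hh0 hhx t) <| by
      rw [sum_comm, sum_comm (s := univ)]
      exact sum_congr rfl fun s _ => hrow s
  funext t j
  exact congrFun (eq_of_sum_Iic_eq fun t => congrFun (hcum t) j) t

end Uniqueness

end GroupDecomposition

theorem group_decomposition_general {G : Type*} [Fintype G] [LinearOrder G]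
    (x : G → ℝ) (hx0 : ∀ j, 0 ≤ x j)
    (T : ℝ) (hT : T = ∑ j, x j) (p : ℕ) (hp : p = ⌈T⌉₊) :
    ∃! g : Fin p → G → ℝ,
      (∀ t j, 0 ≤ g t j ∧ g t j ≤ 1) ∧
      -- (P1)
      (∀ t : Fin p, (t : ℕ) + 1 < p → ∑ j, g t j = 1) ∧
      (∀ t : Fin p, (t : ℕ) + 1 = p → ∑ j, g t j = T - ((p : ℝ) - 1)) ∧
      -- (P2)
      (∀ j, ∑ t, g t j = x j) ∧
      -- (P3)
      (∀ t t' : Fin p, t < t' → ∀ j j' : G, j < j' →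
        ¬(0 < g t j' ∧ 0 < g t' j)) := by
  subst hT
  have hTp : ∑ j, x j ≤ p := hp ▸ Nat.le_ceil _
  have hpT : (p : ℝ) < ∑ j, x j + 1 := hp ▸ Nat.ceil_lt_add_one (sum_nonneg fun j _ => hx0 j)
  have hrow (t : Fin p) : ∑ j, groupPart x t j = min (∑ j, x j) (t + 1) - t := by
    have : (t : ℝ) + 1 ≤ p := by exact_mod_cast t.isLt
    exact sum_groupPart hx0 (by linarith)
  have hP1 (t : Fin p) (ht : (t : ℕ) + 1 < p) : ∑ j, groupPart x t j = 1 := by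
    have : (t : ℝ) + 2 ≤ p := by exact_mod_cast ht
    rw [hrow, min_eq_right (by linarith)]
    ring
  have hPlast (t : Fin p) (ht : (t : ℕ) + 1 = p) :
      ∑ j, groupPart x t j = ∑ j, x j - ((p : ℝ) - 1) := by
    have : (t : ℝ) + 1 = p := by exact_mod_cast ht
    rw [hrow, min_eq_left (by linarith), ← this]
    ring
  have hst : IsStaircase fun t : Fin p => groupPart x t := fun t t' h =>
    isStaircase_groupPart hx0 t t' h
  refine ⟨fun t => groupPart x t, ⟨fun t j => ⟨intervalOverlap_nonneg, groupPart_le_one t j⟩,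
    hP1, hPlast, sum_fin_groupPart hx0 hTp, hst⟩, ?_⟩
  rintro g ⟨hg01, hg1, hglast, hgx, hgst⟩
  refine IsStaircase.eq_of_sum_eq hgst hst (fun t j => (hg01 t j).1)
    (fun t j => intervalOverlap_nonneg) hgx (sum_fin_groupPart hx0 hTp) fun t => ?_
  rcases (Nat.succ_le_of_lt t.isLt).lt_or_eq with ht | ht
  · rw [hg1 t ht, hP1 t ht]
  · rw [hglast t ht, hPlast t ht]

/-- The Shmoys–Tardos group decomposition: fractions `x : G → [0,1]` over a
linearly ordered finite item set with total mass `T > 0` decompose uniquely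
into `p = ⌈T⌉` groups `g^1, …, g^p` satisfying (P1), (P2), (P3). -/
theorem group_decomposition {G : Type*} [Fintype G] [LinearOrder G]
    (x : G → ℝ) (hx0 : ∀ j, 0 ≤ x j) (hx1 : ∀ j, x j ≤ 1)
    (T : ℝ) (hT : T = ∑ j, x j) (hTpos : 0 < T) (p : ℕ) (hp : p = ⌈T⌉₊) :
    ∃! g : Fin p → G → ℝ,
      (∀ t j, 0 ≤ g t j ∧ g t j ≤ 1) ∧
      -- (P1)
      (∀ t : Fin p, (t : ℕ) + 1 < p → ∑ j, g t j = 1) ∧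
      (∀ t : Fin p, (t : ℕ) + 1 = p → ∑ j, g t j = T - ((p : ℝ) - 1)) ∧
      -- (P2)
      (∀ j, ∑ t, g t j = x j) ∧
      -- (P3)
      (∀ t t' : Fin p, t < t' → ∀ j j' : G, j < j' →
        ¬(0 < g t j' ∧ 0 < g t' j)) :=
  group_decomposition_general x hx0 T hT p hp
end

section
/- Let D be a doubly-substochastic nonnegative rational matrix indexed by groups G and items J, where each item column sums to exactly 1 and each group row sums to at most 1. Then D can be written as a convex combination of at most |G|·|J| + 1 partial matchings (0/1 matrices with at most one 1 per row and per column) such that every item is matched in every matching of the support. -/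
open Finset

lemma substochastic_mem_convexHull {G J : Type*} [Fintype G] [Fintype J]
    (D : G → J → ℚ) (hD0 : ∀ g j, 0 ≤ D g j)
    (hcol : ∀ j, ∑ g, D g j = 1) (hrow : ∀ g, ∑ j, D g j ≤ 1) :
    D ∈ convexHull ℚ {M : G → J → ℚ | (∀ g j, M g j = 0 ∨ M g j = 1) ∧
      (∀ g, ∑ j, M g j ≤ 1) ∧ (∀ j, ∑ g, M g j = 1)} := by
  classical
  rcases isEmpty_or_nonempty J with hJ | hJ
  · apply subset_convexHull
    exact ⟨fun g j => isEmptyElim j, fun g => by simp, fun j => isEmptyElim j⟩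
  have hc : (0:ℚ) < (Fintype.card J : ℚ) := by
    exact_mod_cast Fintype.card_pos
  set c : ℚ := (Fintype.card J : ℚ) with hcdef
  set r : G → ℚ := fun g => ∑ j, D g j with hrdef
  have hrsum : ∑ g, r g = c := by
    rw [hrdef, Finset.sum_comm]
    simp [hcol, hcdef]
  have hr0 : ∀ g, 0 ≤ r g := fun g => Finset.sum_nonneg fun j _ => hD0 g j
  set E : Matrix (G ⊕ J) (G ⊕ J) ℚ :=
    Sum.elim (fun g => Sum.elim (fun g' => if g = g' then 1 - r g else 0) (D g))
      (fun _ => Sum.elim (fun g => r g / c) 0) with hEdef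
  have hE : E ∈ doublyStochastic ℚ (G ⊕ J) := by
    rw [mem_doublyStochastic_iff_sum]
    refine ⟨?_, ?_, ?_⟩
    · rintro (g | j) (g' | j')
      · simp only [hEdef, Sum.elim_inl]
        split
        · linarith [hrow g]
        · exact le_rfl
      · simpa [hEdef] using hD0 g j'
      · simpa [hEdef] using div_nonneg (hr0 g') hc.le
      · simp [hEdef]
    · rintro (g | j)
      · simp [hEdef, Fintype.sum_sum_type, Finset.sum_ite_eq, hrdef]
      · simp [hEdef, Fintype.sum_sum_type, ← Finset.sum_div, hrsum, div_self hc.ne']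
    · rintro (g | j)
      · simp only [hEdef, Fintype.sum_sum_type, Sum.elim_inl, Sum.elim_inr,
          Finset.sum_ite_eq', Finset.mem_univ, if_true, Finset.sum_const,
          Finset.card_univ, nsmul_eq_mul]
        field_simp
        rw [← hcdef]; ring
      · simp [hEdef, Fintype.sum_sum_type, hcol]
  obtain ⟨w, hw0, hw1, hwE⟩ := exists_eq_sum_perm_of_mem_doublyStochastic hE
  have hP : ∀ (σ : Equiv.Perm (G ⊕ J)) x y,
      σ.permMatrix ℚ x y = if σ x = y then 1 else 0 := by
    intro σ x y
    simp [Equiv.Perm.permMatrix, PEquiv.toMatrix_apply, Equiv.toPEquiv_apply]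
  have hent : ∀ x y, ∑ σ : Equiv.Perm (G ⊕ J), w σ * (σ.permMatrix ℚ) x y = E x y := by
    intro x y
    have := congrFun (congrFun hwE x) y
    simpa [Matrix.sum_apply, smul_eq_mul] using this
  -- for σ with positive weight, σ maps inr into inl
  have hker : ∀ σ : Equiv.Perm (G ⊕ J), w σ ≠ 0 → ∀ j j', σ (Sum.inr j) ≠ Sum.inr j' := by
    intro σ hσ j j' h
    have h0 : ∑ τ : Equiv.Perm (G ⊕ J), w τ * (τ.permMatrix ℚ) (Sum.inr j) (Sum.inr j') = 0 := by
      rw [hent]; simp [hEdef]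
    have := (Finset.sum_eq_zero_iff_of_nonneg (fun τ _ => by
      have := hw0 τ
      have : (0:ℚ) ≤ (τ.permMatrix ℚ) (Sum.inr j) (Sum.inr j') := by
        rw [hP]; split <;> norm_num
      positivity)).1 h0 σ (Finset.mem_univ σ)
    rw [hP] at this
    simp [h] at this
    exact hσ this
  have hcolσ : ∀ σ : Equiv.Perm (G ⊕ J), w σ ≠ 0 → ∀ j : J,
      ∑ g : G, (σ.permMatrix ℚ) (Sum.inl g) (Sum.inr j) = 1 := by
    intro σ hσ j
    obtain ⟨g₀, hg₀⟩ : ∃ g₀, σ.symm (Sum.inr j) = Sum.inl g₀ := by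
      rcases h : σ.symm (Sum.inr j) with g₀ | j₀
      · exact ⟨g₀, rfl⟩
      · exact absurd (by rw [← h, Equiv.apply_symm_apply]) (hker σ hσ j₀ j)
    have key : ∀ g : G, σ (Sum.inl g) = Sum.inr j ↔ g = g₀ := by
      intro g
      rw [← Equiv.eq_symm_apply, hg₀]
      simp
    simp only [hP]
    rw [Finset.sum_congr rfl (fun g _ => by rw [if_congr (key g) rfl rfl])]
    simp
  -- now build the convex combination
  set s : Finset (Equiv.Perm (G ⊕ J)) := Finset.univ.filter (fun σ => w σ ≠ 0) with hsdef
  refine mem_convexHull_of_exists_fintype (fun i : s => w i)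
    (fun i : s => fun g j => ((i : Equiv.Perm (G ⊕ J)).permMatrix ℚ) (Sum.inl g) (Sum.inr j))
    (fun i => hw0 i) ?_ ?_ ?_
  · rw [Finset.sum_coe_sort s w, hsdef, Finset.sum_filter_ne_zero, hw1]
  · rintro ⟨σ, hσ⟩
    have hσ' : w σ ≠ 0 := by simpa [hsdef] using hσ
    refine ⟨fun g j => ?_, fun g => ?_, fun j => hcolσ σ hσ' j⟩
    · show (σ.permMatrix ℚ) (Sum.inl g) (Sum.inr j) = 0 ∨ (σ.permMatrix ℚ) (Sum.inl g) (Sum.inr j) = 1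
      rw [hP]; split
      · right; rfl
      · left; rfl
    · show ∑ j : J, (σ.permMatrix ℚ) (Sum.inl g) (Sum.inr j) ≤ 1
      simp only [hP]
      rcases h : σ (Sum.inl g) with g' | j₀ <;> simp [h]
  · funext g j
    simp only [Finset.sum_apply, Pi.smul_apply, smul_eq_mul]
    rw [Finset.sum_coe_sort s (fun σ => w σ * (σ.permMatrix ℚ) (Sum.inl g) (Sum.inr j)), hsdef]
    rw [Finset.sum_filter_of_ne (fun σ _ h => by
      intro hw; rw [hw, zero_mul] at h; exact h rfl)]
    rw [hent]
    simp [hEdef]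

/-- A doubly-substochastic nonnegative rational matrix whose columns sum to
exactly 1 and rows sum to at most 1 is a convex combination of at most
`|G|·|J| + 1` partial matchings, each of which matches every item. -/
theorem substochastic_decomposition {G J : Type*} [Fintype G] [Fintype J]
    (D : G → J → ℚ) (hD0 : ∀ g j, 0 ≤ D g j)
    (hcol : ∀ j, ∑ g, D g j = 1) (hrow : ∀ g, ∑ j, D g j ≤ 1) :
    ∃ (k : ℕ), k ≤ Fintype.card G * Fintype.card J + 1 ∧
      ∃ (lam : Fin k → ℚ) (M : Fin k → G → J → ℚ),
        (∀ l, 0 ≤ lam l) ∧ (∑ l, lam l = 1) ∧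
        (∀ l g j, M l g j = 0 ∨ M l g j = 1) ∧
        (∀ l g, ∑ j, M l g j ≤ 1) ∧
        (∀ l j, 0 < lam l → ∑ g, M l g j = 1) ∧
        (∀ g j, ∑ l, lam l * M l g j = D g j) := by
  classical
  obtain ⟨ι, hι, z, w, hzT, haff, hwpos, hw1, hsum⟩ :=
    eq_pos_convex_span_of_mem_convexHull (substochastic_mem_convexHull D hD0 hcol hrow)
  letI := hι
  have hT : ∀ i, (∀ g j, z i g j = 0 ∨ z i g j = 1) ∧
      (∀ g, ∑ j, z i g j ≤ 1) ∧ (∀ j, ∑ g, z i g j = 1) := fun i => hzT ⟨i, rfl⟩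
  have hcard : Fintype.card ι ≤ Fintype.card G * Fintype.card J + 1 := by
    have h1 := haff.card_le_finrank_succ
    have h2 : Module.finrank ℚ (vectorSpan ℚ (Set.range z)) ≤
        Module.finrank ℚ (G → J → ℚ) := Submodule.finrank_le _
    have h3 : Module.finrank ℚ (G → J → ℚ) = Fintype.card G * Fintype.card J := by
      rw [Module.finrank_pi_fintype]
      simp [Module.finrank_fintype_fun_eq_card]
    omega
  refine ⟨Fintype.card ι, hcard, ?_⟩
  set e := (Fintype.equivFin ι).symm with hedef
  refine ⟨fun l => w (e l), fun l => z (e l), fun l => (hwpos (e l)).le, ?_,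
    fun l => (hT (e l)).1, fun l => (hT (e l)).2.1, fun l j _ => (hT (e l)).2.2 j, ?_⟩
  · exact (Equiv.sum_comp e w).trans hw1
  · intro g j
    have := congrFun (congrFun hsum g) j
    simp only [Finset.sum_apply, Pi.smul_apply, smul_eq_mul] at this
    exact (Equiv.sum_comp e (fun i => w i * z i g j)).trans this
end

section
/- Let v : G → ℝ≥0 be additive over a finite linearly ordered set G sorted by non-increasing v, and let S, S' ⊆ G be such that S' = {j'_1 ≺ j'_2 ≺ ⋯ ≺ j'_q} and S = {j_1 ≺ ⋯ ≺ j_r} with r ≥ q − 1 and j_t ⪯ j'_{t+1} (j_t comes no later than j'_{t+1} in the order) for all 1 ≤ t ≤ q−1. Then v(S' \ {j'_1}) ≤ v(S). -/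
open Finset

theorem sum_Ico_one_le_sum_range_of_shift_le {M : Type*} [AddCommMonoid M] [PartialOrder M]
    [IsOrderedAddMonoid M] {f g : ℕ → M} {q r : ℕ} (hg : ∀ t, 0 ≤ g t) (hqr : q - 1 ≤ r)
    (hfg : ∀ t, t + 1 < q → f (t + 1) ≤ g t) :
    ∑ t ∈ Ico 1 q, f t ≤ ∑ t ∈ range r, g t := by
  calc ∑ t ∈ Ico 1 q, f t
      = ∑ t ∈ range (q - 1), f (t + 1) := by
        rw [sum_Ico_eq_sum_range]
        simp only [add_comm]
    _ ≤ ∑ t ∈ range (q - 1), g t :=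
        sum_le_sum fun t ht => hfg t (by rw [mem_range] at ht; omega)
    _ ≤ ∑ t ∈ range r, g t :=
        sum_le_sum_of_subset_of_nonneg (range_subset_range.mpr hqr) fun t _ _ => hg t

theorem dominate_after_removal_general {G : Type*} [LinearOrder G]
    (v : G → ℝ) (hv0 : ∀ j, 0 ≤ v j)
    (hv : ∀ j j' : G, j ≤ j' → v j' ≤ v j)
    (q r : ℕ) (j' : ℕ → G) (j : ℕ → G)
    (hr : q - 1 ≤ r)
    (hdom : ∀ t, t + 1 < q → j t ≤ j' (t + 1)) :
    ∑ t ∈ Finset.Ico 1 q, v (j' t) ≤ ∑ t ∈ Finset.range r, v (j t) :=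
  sum_Ico_one_le_sum_range_of_shift_le (fun t => hv0 (j t)) hr
    fun t ht => hv _ _ (hdom t ht)

/-- If `S = {j_1 ≺ ⋯ ≺ j_r}` and `S' = {j'_1 ≺ ⋯ ≺ j'_q}` (listed in the
value order, earlier items having weakly larger value), `r ≥ q − 1`, and
`j_t ⪯ j'_{t+1}` for all `1 ≤ t ≤ q−1`, then `v(S' \ {j'_1}) ≤ v(S)`. -/
theorem dominate_after_removal {G : Type*} [LinearOrder G]
    (v : G → ℝ) (hv0 : ∀ j, 0 ≤ v j)
    (hv : ∀ j j' : G, j ≤ j' → v j' ≤ v j)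
    (q r : ℕ) (j' : ℕ → G) (j : ℕ → G)
    (hj'mono : ∀ t, t + 1 < q → j' t < j' (t + 1))
    (hjmono : ∀ t, t + 1 < r → j t < j (t + 1))
    (hr : q - 1 ≤ r)
    (hdom : ∀ t, t + 1 < q → j t ≤ j' (t + 1)) :
    ∑ t ∈ Finset.Ico 1 q, v (j' t) ≤ ∑ t ∈ Finset.range r, v (j t) :=
  dominate_after_removal_general v hv0 hv q r j' j hr hdom
end

section
/- Let v_{ij} ≥ 0, let S ⊆ G and let v̄_{ij} be v_{ij} rounded down to the nearest integer multiple of ε·v*/(2m), where v* = max_{j∈S} v_{ij} and m = |G|. If S' ⊆ G satisfies ∑_{j∈S'} v̄_{ij} ≥ ∑_{j∈S} v̄_{ij}, then ∑_{j∈S} v_{ij} ≤ (1 + ε/2)·∑_{j∈S'} v_{ij}, provided v* ≤ ∑_{j∈S'} v_{ij}. -/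
open Finset Real

/-- Rounding values down to multiples of `ε·v*/(2m)` in the separation oracle:
if `S'` beats `S` in rounded value and `v* ≤ v(S')`, then
`v(S) ≤ (1 + ε/2) v(S')`. -/
theorem separation_rounding {G : Type*} [Fintype G] [DecidableEq G]
    (v : G → ℝ) (hv : ∀ j, 0 ≤ v j) (ε : ℝ) (hε : 0 < ε)
    (S S' : Finset G) (hSne : S.Nonempty)
    (m : ℕ) (hm : m = Fintype.card G)
    (vstar : ℝ) (hvstar : vstar = S.sup' hSne v)
    (hle : ∀ j ∈ S', v j ≤ vstar)
    (vbar : G → ℝ)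
    (hvbar : ∀ j, vbar j = ⌊v j / (ε * vstar / (2 * m))⌋ * (ε * vstar / (2 * m)))
    (hbeat : ∑ j ∈ S, vbar j ≤ ∑ j ∈ S', vbar j)
    (hcov : vstar ≤ ∑ j ∈ S', v j) :
    ∑ j ∈ S, v j ≤ (1 + ε / 2) * ∑ j ∈ S', v j := by
  have hS'nonneg : 0 ≤ ∑ j ∈ S', v j := Finset.sum_nonneg fun j _ => hv j
  have hSle : ∀ j ∈ S, v j ≤ vstar := fun j hj => hvstar ▸ Finset.le_sup' v hj
  have hvstar0 : 0 ≤ vstar := by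
    obtain ⟨j, hj⟩ := hSne
    exact le_trans (hv j) (hSle j hj)
  have hmpos : 0 < (m : ℝ) := by
    have : 0 < Fintype.card G := Fintype.card_pos_iff.mpr ⟨hSne.choose⟩
    exact_mod_cast hm ▸ this
  rcases eq_or_lt_of_le hvstar0 with h0 | hpos
  · -- vstar = 0, so all v j, j ∈ S, are 0
    have : ∑ j ∈ S, v j ≤ 0 := by
      apply Finset.sum_nonpos
      intro j hj
      exact le_trans (hSle j hj) h0.ge
    have hrhs : 0 ≤ (1 + ε / 2) * ∑ j ∈ S', v j := by positivity
    linarith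
  · set δ := ε * vstar / (2 * m) with hδ
    have hδpos : 0 < δ := by positivity
    have hbar_le : ∀ j, vbar j ≤ v j := by
      intro j
      rw [hvbar j]
      rw [← le_div_iff₀ hδpos]
      exact Int.floor_le _
    have hle_bar : ∀ j, v j ≤ vbar j + δ := by
      intro j
      rw [hvbar j]
      have := Int.lt_floor_add_one (v j / δ)
      have h2 : v j / δ < ⌊v j / δ⌋ + 1 := this
      nlinarith [(div_lt_iff₀ hδpos).mp h2]
    have h1 : ∑ j ∈ S, v j ≤ ∑ j ∈ S, vbar j + S.card * δ := by
      calc ∑ j ∈ S, v j ≤ ∑ j ∈ S, (vbar j + δ) := Finset.sum_le_sum fun j _ => hle_bar j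
        _ = ∑ j ∈ S, vbar j + S.card * δ := by rw [Finset.sum_add_distrib]; simp [mul_comm]
    have hcard : (S.card : ℝ) ≤ m := by
      have := Finset.card_le_univ S
      rw [hm]
      exact_mod_cast this
    have h2 : ∑ j ∈ S', vbar j ≤ ∑ j ∈ S', v j :=
      Finset.sum_le_sum fun j _ => hbar_le j
    have h3 : (S.card : ℝ) * δ ≤ m * δ := by
      exact mul_le_mul_of_nonneg_right hcard hδpos.le
    have h4 : (m : ℝ) * δ = ε * vstar / 2 := by
      field_simp [hδ]
      rw [hδ]; field_simp [hmpos.ne']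
    have h5 : ε * vstar / 2 ≤ ε / 2 * ∑ j ∈ S', v j := by
      have := mul_le_mul_of_nonneg_left hcov (le_of_lt (by positivity : (0:ℝ) < ε / 2))
      linarith
    linarith
end
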